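/- arXiv:1203.0140 — 3 statements merged into one kernel-verified Lean document; each statement's English description precedes it below -/
import Mathlib

section
/- Let T be a directed tree, let λ^(i) = {λ^(i)_v}_{v∈V°} (i = 1, 2, 3, …) and λ = {λ_v}_{v∈V°} be families of complex numbers, and let S_{λ^(i)} and S_λ be the corresponding weighted shifts on T. Suppose that (i) E ⊆ D∞(S_λ) ∩ ⋂_{i=1}^∞ D∞(S_{λ^(i)}), (ii) lim_{i→∞} λ^(i)_v = λ_v for every v ∈ V°, and (iii) lim_{i→∞} ‖S_{λ^(i)}ⁿ e_u‖ = ‖S_λⁿ e_u‖ for all n ∈ ℕ and u ∈ V. Then ⟨S_λ^m e_u, S_λ^n e_v⟩ = lim_{i→∞} ⟨S_{λ^(i)}^m e_u, S_{λ^(i)}^n e_v⟩ for all u, v ∈ V and m, n ∈ ℕ. -/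
open Filter
open scoped ENNReal InnerProductSpace ComplexConjugate

attribute [local instance] Classical.propDecidable

noncomputable section

namespace Paper

universe u

/-- A directed tree: a directed graph which is connected (as an undirected graph), has no
(directed) circuits, and in which every vertex has at most one parent. -/
structure DirectedTree (V : Type*) where
  E : V → V → Prop
  connected : ∀ u v : V, Relation.ReflTransGen (fun a b => E a b ∨ E b a) u v
  noCircuits : ∀ v : V, ¬ Relation.TransGen E v v
  par_unique : ∀ ⦃u₁ u₂ v : V⦄, E u₁ v → E u₂ v → u₁ = u₂

namespace DirectedTree

variable {V : Type*} (t : DirectedTree V)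

/-- The set of children of a vertex. -/
def chi (u : V) : Set V := {v | t.E u v}

/-- `v` has a parent, i.e. `v ∈ V°`. -/
def hasPar (v : V) : Prop := ∃ u, t.E u v

/-- The parent partial function, as a total function with junk value `v` at parentless
vertices. -/
noncomputable def par (v : V) : V := if h : t.hasPar v then h.choose else v

/-- Children of a set of vertices. -/
def chiSet (W : Set V) : Set V := {v | ∃ u ∈ W, t.E u v}

/-- `n`-fold children of a set of vertices. -/
def chiIter : ℕ → Set V → Set V
  | 0, W => W
  | n + 1, W => t.chiSet (chiIter n W)

/-- `Chi^⟨n⟩(u)`. -/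
def chin (n : ℕ) (u : V) : Set V := t.chiIter n {u}

/-- The descendants of a vertex. -/
def des (u : V) : Set V := ⋃ n : ℕ, t.chin n u

/-- `λ_{u∣v} = ∏_{j=0}^{n-1} λ_{par^j(v)}` for `v ∈ Chi^⟨n⟩(u)`. -/
noncomputable def wprod (lam : V → ℂ) (n : ℕ) (v : V) : ℂ :=
  ∏ j ∈ Finset.range n, lam (t.par^[j] v)

end DirectedTree

/-- The Hilbert space `ℓ²(V)`. -/
abbrev H2 (V : Type*) := lp (fun _ : V => ℂ) 2

/-- The basis vector `e_u ∈ ℓ²(V)`. -/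
noncomputable def evec {V : Type*} (u : V) : H2 V :=
  haveI := Classical.decEq V
  lp.single 2 u 1

/-- The linear subspace `E = lin{e_u : u ∈ V}`. -/
noncomputable def espan (V : Type*) : Submodule ℂ (H2 V) :=
  Submodule.span ℂ (Set.range (evec : V → H2 V))

/-- The map `Λ_T` on all functions `V → ℂ`:
`(Λ_T f)(v) = λ_v f(par(v))` for `v ∈ V°` and `0` at the root. -/
noncomputable def lamLin {V : Type*} (t : DirectedTree V) (lam : V → ℂ) :
    (V → ℂ) →ₗ[ℂ] (V → ℂ) where
  toFun f := fun v => if t.hasPar v then lam v * f (t.par v) else 0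
  map_add' f g := by
    funext v
    by_cases h : t.hasPar v <;> simp [h, mul_add]
  map_smul' c f := by
    funext v
    by_cases h : t.hasPar v <;> simp [h] <;> ring

/-- The domain `{f ∈ ℓ²(V) : Λ_T f ∈ ℓ²(V)}` of the weighted shift. -/
noncomputable def shiftDom {V : Type*} (t : DirectedTree V) (lam : V → ℂ) :
    Submodule ℂ (H2 V) where
  carrier := {f | Memℓp (lamLin t lam f) 2}
  zero_mem' := by
    simpa only [Set.mem_setOf_eq, lp.coeFn_zero, map_zero] using zero_memℓp
  add_mem' := by
    intro f g hf hg
    simp only [Set.mem_setOf_eq, lp.coeFn_add, map_add] at *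
    exact hf.add hg
  smul_mem' := by
    intro c f hf
    simp only [Set.mem_setOf_eq] at hf ⊢
    rw [lp.coeFn_smul, LinearMap.map_smul]
    exact hf.const_smul c

/-- The weighted shift `S_λ` on the directed tree `T`, as an unbounded operator in `ℓ²(V)`. -/
noncomputable def shift {V : Type*} (t : DirectedTree V) (lam : V → ℂ) :
    H2 V →ₗ.[ℂ] H2 V where
  domain := shiftDom t lam
  toFun :=
    { toFun := fun f => (⟨lamLin t lam f, f.2⟩ : H2 V)
      map_add' := by
        intro f g
        apply lp.ext
        simp only [Submodule.coe_add, lp.coeFn_add, map_add]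
      map_smul' := by
        intro c f
        apply lp.ext
        simp only [SetLike.val_smul, lp.coeFn_smul, LinearMap.map_smul, RingHom.id_apply] }

section Operator

variable {H : Type*} [NormedAddCommGroup H] [InnerProductSpace ℂ H]

/-- `x ∈ D(Tⁿ)`. -/
def iterMem (T : H →ₗ.[ℂ] H) : ℕ → H → Prop
  | 0, _ => True
  | n + 1, x => ∃ h : x ∈ T.domain, iterMem T n (T ⟨x, h⟩)

/-- `Tⁿ x` (junk value `0` if undefined along the way). -/
noncomputable def iterApp (T : H →ₗ.[ℂ] H) : ℕ → H → H
  | 0, x => x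
  | n + 1, x => if h : x ∈ T.domain then iterApp T n (T ⟨x, h⟩) else 0

/-- The inner product in the paper's convention: `⟨x, y⟩` is linear in `x`. -/
noncomputable def pinner (x y : H) : ℂ := inner (𝕜 := ℂ) y x

/-- `E ⊆ D∞(S_λ)` where `E = lin{e_u : u ∈ V}`. -/
def spanDomInfty {V : Type*} (t : DirectedTree V) (lam : V → ℂ) : Prop :=
  ∀ f ∈ espan V, ∀ n : ℕ, iterMem (shift t lam) n f

/-- A linear subspace `F` is a core of `T` if the graph of `T` is contained in the closure of
the graph of `T|_F`. -/
def IsCore (T : H →ₗ.[ℂ] H) (F : Submodule ℂ H) : Prop :=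
  (T.graph : Set (H × H)) ⊆ closure ((T.domRestrict F).graph : Set (H × H))

/-- `f` is a quasi-analytic vector of `T`:
`f ∈ D∞(T)` and `∑_{n ≥ 1} ‖Tⁿ f‖^{-1/n} = ∞` (convention `1/0 = ∞`). -/
def QuasiAnalyticVec (T : H →ₗ.[ℂ] H) (f : H) : Prop :=
  (∀ n : ℕ, iterMem T n f) ∧
    ∑' n : ℕ, (ENNReal.ofReal (‖iterApp T (n + 1) f‖ ^ (1 / (n + 1 : ℝ))))⁻¹ = ∞

end Operator

section NormalSubnormal

/-- A normal operator: closed, densely defined, with `D(N) = D(N*)` and `‖N* h‖ = ‖N h‖` on the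
common domain. -/
structure IsNormalOp {K : Type*} [NormedAddCommGroup K] [InnerProductSpace ℂ K]
    [CompleteSpace K] (N : K →ₗ.[ℂ] K) : Prop where
  dense : Dense (N.domain : Set K)
  isClosed : N.IsClosed
  dom_adjoint : N.adjoint.domain = N.domain
  norm_adjoint : ∀ (x : K) (hx : x ∈ N.domain) (hx' : x ∈ N.adjoint.domain),
    ‖N.adjoint ⟨x, hx'⟩‖ = ‖N ⟨x, hx⟩‖

/-- A normal extension of `S`: a Hilbert space `K`, an isometric linear embedding `J : H → K`,
and a normal operator `N` in `K` with `N (J h) = J (S h)` for all `h ∈ D(S)`. -/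
structure NormalExtension {H : Type u} [NormedAddCommGroup H] [InnerProductSpace ℂ H]
    (S : H →ₗ.[ℂ] H) : Type (u + 1) where
  K : Type u
  [instNG : NormedAddCommGroup K]
  [instIP : InnerProductSpace ℂ K]
  [instCS : CompleteSpace K]
  J : H →ₗᵢ[ℂ] K
  N : K →ₗ.[ℂ] K
  normal : IsNormalOp N
  ext_prop : ∀ x : S.domain, ∃ hx : J x ∈ N.domain, N ⟨J x, hx⟩ = J (S x)

/-- A densely defined operator is subnormal if it has a normal extension. -/
def Subnormal {H : Type u} [NormedAddCommGroup H] [InnerProductSpace ℂ H]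
    (S : H →ₗ.[ℂ] H) : Prop :=
  Dense (S.domain : Set H) ∧ Nonempty (NormalExtension S)

/-- A hyponormal operator: densely defined, `D(S) ⊆ D(S*)` and `‖S* f‖ ≤ ‖S f‖` on `D(S)`. -/
def Hyponormal {H : Type*} [NormedAddCommGroup H] [InnerProductSpace ℂ H] [CompleteSpace H]
    (S : H →ₗ.[ℂ] H) : Prop :=
  Dense (S.domain : Set H) ∧ S.domain ≤ S.adjoint.domain ∧
    ∀ (x : H) (hx : x ∈ S.domain) (hx' : x ∈ S.adjoint.domain),
      ‖S.adjoint ⟨x, hx'⟩‖ ≤ ‖S ⟨x, hx⟩‖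

end NormalSubnormal

section Stieltjes

open MeasureTheory

/-- `μ` is a representing measure of `{t_n}`: a positive Borel measure on `ℝ₊`
with `t_n = ∫_0^∞ sⁿ dμ(s)` for all `n`. -/
def IsRepMeasure (μ : Measure ℝ) (t : ℕ → ℝ) : Prop :=
  μ (Set.Iio 0) = 0 ∧ ∀ n : ℕ, Integrable (fun s => s ^ n) μ ∧ t n = ∫ s, s ^ n ∂μ

/-- `{t_n}` is a Stieltjes moment sequence. -/
def IsStieltjes (t : ℕ → ℝ) : Prop := ∃ μ : Measure ℝ, IsRepMeasure μ t

/-- A Stieltjes moment sequence is determinate if it has only one representing measure. -/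
def Determinate (t : ℕ → ℝ) : Prop :=
  ∀ ⦃μ ν : Measure ℝ⦄, IsRepMeasure μ t → IsRepMeasure ν t → μ = ν

/-- `∫_σ (1/s) dμ(s)`, with the convention `1/0 = ∞`. -/
noncomputable def recipInt (μ : Measure ℝ) (σ : Set ℝ) : ℝ≥0∞ :=
  ∫⁻ s in σ, (ENNReal.ofReal s)⁻¹ ∂μ

/-- The sequence `(θ, t_0, t_1, …)`. -/
def prepend (θ : ℝ) (t : ℕ → ℝ) : ℕ → ℝ
  | 0 => θ
  | n + 1 => t n

/-- `{t_n}` is positive definite. -/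
def PosDefSeq (t : ℕ → ℝ) : Prop :=
  ∀ (n : ℕ) (α : ℕ → ℂ),
    0 ≤ (∑ k ∈ Finset.range (n + 1), ∑ l ∈ Finset.range (n + 1),
      (t (k + l) : ℂ) * α k * (starRingEnd ℂ) (α l)).re

/-- The measure `ν_μ(σ) = ∫_σ (1/s) dμ(s) + (θ − ∫_0^∞ (1/s) dμ(s)) δ₀(σ)`. -/
noncomputable def numap (θ : ℝ) (μ : Measure ℝ) : Measure ℝ :=
  μ.withDensity (fun s => (ENNReal.ofReal s)⁻¹) +
    (ENNReal.ofReal θ - recipInt μ Set.univ) • Measure.dirac (0 : ℝ)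

/-- The measure `μ_ν(σ) = ∫_σ s dν(s)`. -/
noncomputable def mumap (ν : Measure ℝ) : Measure ℝ :=
  ν.withDensity fun s => ENNReal.ofReal s

end Stieltjes

section Consistency

open MeasureTheory

variable {V : Type*}

/-- The consistency condition \eqref{muu+} at the vertex `u`:
`μ_u(σ) = Σ_{v ∈ Chi(u)} |λ_v|² ∫_σ (1/s) dμ_v(s) + ε_u δ₀(σ)`. -/
def Consistent (t : DirectedTree V) (lam : V → ℂ) (μ : V → Measure ℝ) (ε : V → ℝ)
    (u : V) : Prop :=
  ∀ σ : Set ℝ, MeasurableSet σ →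
    μ u σ = (∑' v : t.chi u, ENNReal.ofReal (‖lam (v : V)‖ ^ 2) * recipInt (μ (v : V)) σ)
      + ENNReal.ofReal (ε u) * Measure.dirac (0 : ℝ) σ

/-- The measure `μ_u` from Lemma charsub2, built from the children measures:
`μ_u(σ) = Σ_{v ∈ Chi(u)} |λ_v|² ∫_σ (1/s) dμ_v(s) + ε_u δ₀(σ)` with
`ε_u = 1 − Σ_{v ∈ Chi(u)} |λ_v|² ∫_0^∞ (1/s) dμ_v(s)`. -/
noncomputable def consMeasure (t : DirectedTree V) (lam : V → ℂ) (μ : V → Measure ℝ)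
    (u : V) : Measure ℝ :=
  Measure.sum (fun v : t.chi u =>
      ENNReal.ofReal (‖lam (v : V)‖ ^ 2) •
        (μ (v : V)).withDensity fun s => (ENNReal.ofReal s)⁻¹) +
    (1 - ∑' v : t.chi u, ENNReal.ofReal (‖lam (v : V)‖ ^ 2) * recipInt (μ (v : V)) Set.univ) •
      Measure.dirac (0 : ℝ)

end Consistency

end Paper

open Paper MeasureTheory Filter
open scoped ENNReal

/-! Coordinatewise, `Λⁿ f` at a vertex is a product of `n` weights times a value of `f`, so
(ii) makes `S_{λ^(i)}ⁿ e_u` converge to `S_λⁿ e_u` pointwise on `V`. In `ℓ²`, pointwise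
convergence of a bounded sequence is weak convergence, and in a Hilbert space weak convergence
together with convergence of the norms (iii) is norm convergence; the inner products then
converge by continuity. -/

open Topology

theorem tendsto_of_tendsto_inner_of_tendsto_norm {𝕜 E ι : Type*} [RCLike 𝕜]
    [NormedAddCommGroup E] [InnerProductSpace 𝕜 E] {l : Filter ι} {xs : ι → E} {x : E}
    (hinner : Tendsto (fun i => ⟪xs i, x⟫_𝕜) l (𝓝 ⟪x, x⟫_𝕜))
    (hnorm : Tendsto (fun i => ‖xs i‖) l (𝓝 ‖x‖)) :
    Tendsto xs l (𝓝 x) := by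
  have hsq : Tendsto (fun i => ‖xs i - x‖ ^ 2) l (𝓝 0) := by
    have hre := (RCLike.continuous_re.tendsto _).comp hinner
    have := ((hnorm.pow 2).sub (hre.const_mul 2)).add_const (‖x‖ ^ 2)
    simp only [Function.comp_def, ← norm_sub_sq, inner_self_eq_norm_sq] at this
    convert this using 2
    ring
  rw [tendsto_iff_norm_sub_tendsto_zero]
  simpa [Function.comp_def, Real.sqrt_sq (norm_nonneg _)] using
    (Real.continuous_sqrt.tendsto 0).comp hsq

namespace lp

variable {ι κ : Type*} {G : ι → Type*} [∀ i, NormedAddCommGroup (G i)]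

theorem tendsto_inner_of_tendsto_apply {𝕜 : Type*} [RCLike 𝕜]
    [∀ i, InnerProductSpace 𝕜 (G i)] {l : Filter κ} {xs : κ → lp G 2} {x : lp G 2}
    (hbdd : BddAbove (Set.range fun k => ‖xs k‖))
    (happly : ∀ i, Tendsto (fun k => xs k i) l (𝓝 (x i))) (y : lp G 2) :
    Tendsto (fun k => ⟪xs k, y⟫_𝕜) l (𝓝 ⟪x, y⟫_𝕜) := by
  have hequi : Equicontinuous fun k => ⇑(innerSL 𝕜 (xs k)) :=
    ((NormedSpace.equicontinuous_TFAE fun k => innerSL 𝕜 (xs k)).out 7 1).mp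
      (by simpa only [innerSL_apply_norm] using hbdd)
  have hclosed := hequi.isClosed_setOfPred_tendsto (l := l) (innerSL 𝕜 x).continuous
  have hpartial : ∀ s : Finset ι,
      Tendsto (fun k => ⟪xs k, ∑ i ∈ s, lp.single 2 i (y i)⟫_𝕜) l
        (𝓝 ⟪x, ∑ i ∈ s, lp.single 2 i (y i)⟫_𝕜) := by
    intro s
    simp only [inner_sum, lp.inner_single_right]
    exact tendsto_finsetSum s fun i _ => (happly i).inner tendsto_const_nhds
  exact hclosed.mem_of_tendsto (lp.hasSum_single ENNReal.ofNat_ne_top y)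
    (Eventually.of_forall hpartial)

theorem tendsto_of_tendsto_apply_of_tendsto_norm (𝕜 : Type*) [RCLike 𝕜]
    [∀ i, InnerProductSpace 𝕜 (G i)] {xs : ℕ → lp G 2} {x : lp G 2}
    (happly : ∀ i, Tendsto (fun k => xs k i) atTop (𝓝 (x i)))
    (hnorm : Tendsto (fun k => ‖xs k‖) atTop (𝓝 ‖x‖)) :
    Tendsto xs atTop (𝓝 x) :=
  tendsto_of_tendsto_inner_of_tendsto_norm (𝕜 := 𝕜)
    (tendsto_inner_of_tendsto_apply
      (Metric.isBounded_range_of_tendsto _ hnorm).bddAbove happly x) hnorm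

end lp

namespace Paper

variable {V ι : Type*} {t : DirectedTree V} {lam : V → ℂ}

theorem coe_iterApp_shift :
    ∀ {n : ℕ} {f : H2 V}, iterMem (shift t lam) n f →
      ⇑(iterApp (shift t lam) n f) = (lamLin t lam)^[n] ⇑f
  | 0, _, _ => rfl
  | n + 1, f, ⟨hf, hiter⟩ => by
    rw [iterApp, dif_pos hf, coe_iterApp_shift hiter, Function.iterate_succ_apply]
    rfl

theorem lamLin_apply (f : V → ℂ) (v : V) :
    lamLin t lam f v = if t.hasPar v then lam v * f (t.par v) else 0 :=
  rfl

theorem tendsto_lamLin_iterate_apply {l : Filter ι} {lamI : ι → V → ℂ}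
    (hlam : ∀ v, t.hasPar v → Tendsto (fun i => lamI i v) l (𝓝 (lam v))) (f : V → ℂ) :
    ∀ (n : ℕ) (v : V),
      Tendsto (fun i => (lamLin t (lamI i))^[n] f v) l (𝓝 ((lamLin t lam)^[n] f v))
  | 0, _ => tendsto_const_nhds
  | n + 1, v => by
    simp only [Function.iterate_succ_apply', lamLin_apply]
    by_cases hv : t.hasPar v
    · simpa only [if_pos hv] using (hlam v hv).mul (tendsto_lamLin_iterate_apply hlam f n _)
    · simpa only [if_neg hv] using tendsto_const_nhds

theorem tendsto_iterApp_shift_apply {l : Filter ι} {lamI : ι → V → ℂ}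
    (hlam : ∀ v, t.hasPar v → Tendsto (fun i => lamI i v) l (𝓝 (lam v)))
    {n : ℕ} {f : H2 V} (hf : iterMem (shift t lam) n f)
    (hfI : ∀ i, iterMem (shift t (lamI i)) n f) (v : V) :
    Tendsto (fun i => iterApp (shift t (lamI i)) n f v) l
      (𝓝 (iterApp (shift t lam) n f v)) := by
  simp only [coe_iterApp_shift hf, coe_iterApp_shift (hfI _)]
  exact tendsto_lamLin_iterate_apply hlam f n v

theorem spanDomInfty.iterMem_evec (h : spanDomInfty t lam) (n : ℕ) (u : V) :
    iterMem (shift t lam) n (evec u) :=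
  h _ (Submodule.subset_span ⟨u, rfl⟩) n

end Paper

/-- convergence of inner products of powers for approximating weighted shifts. -/
theorem stmt3 {V : Type*} (t : Paper.DirectedTree V) (lam : V → ℂ) (lamI : ℕ → V → ℂ)
    (h1 : spanDomInfty t lam) (h1' : ∀ i : ℕ, spanDomInfty t (lamI i))
    (h2 : ∀ v : V, t.hasPar v → Tendsto (fun i => lamI i v) atTop (nhds (lam v)))
    (h3 : ∀ (n : ℕ) (u : V),
      Tendsto (fun i => ‖iterApp (shift t (lamI i)) n (evec u)‖) atTop
        (nhds ‖iterApp (shift t lam) n (evec u)‖)) :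
    ∀ (u v : V) (m n : ℕ),
      Tendsto (fun i =>
          pinner (iterApp (shift t (lamI i)) m (evec u))
            (iterApp (shift t (lamI i)) n (evec v))) atTop
        (nhds (pinner (iterApp (shift t lam) m (evec u))
          (iterApp (shift t lam) n (evec v)))) := by
  intro u v m n
  have hconv : ∀ k w, Tendsto (fun i => iterApp (shift t (lamI i)) k (evec w)) atTop
      (𝓝 (iterApp (shift t lam) k (evec w))) := fun k w =>
    lp.tendsto_of_tendsto_apply_of_tendsto_norm ℂ
      (tendsto_iterApp_shift_apply h2 (h1.iterMem_evec k w) fun i => (h1' i).iterMem_evec k w)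
      (h3 k w)
  exact (hconv n v).inner (hconv m u)
end
end

section
/- Let {t_n}_{n≥0} be a determinate Stieltjes moment sequence with (unique) representing measure μ, let θ > 0, set t_{-1} = θ, and suppose {t_{n-1}}_{n≥0} is a Stieltjes moment sequence. Then {t_{n-1}}_{n≥0} is determinate, μ satisfies ∫_0^∞ (1/s) dμ(s) ≤ θ, and the unique representing measure of {t_{n-1}}_{n≥0} is ν_μ, where ν_μ(σ) = ∫_σ (1/s) dμ(s) + (θ − ∫_0^∞ (1/s) dμ(s)) δ₀(σ) for Borel σ ⊆ ℝ₊. -/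
open Filter
open scoped ENNReal InnerProductSpace ComplexConjugate

attribute [local instance] Classical.propDecidable

noncomputable section

open Paper MeasureTheory Filter
open scoped ENNReal

/-! If `ν` represents `(θ, t₀, t₁, …)`, then `s dν(s)` represents `t`, so by determinacy it is `μ`.
Dividing back by `s` recovers `ν` away from `0`, and the atom of `ν` at `0` is whatever mass is
left of the total `ν(ℝ₊) = θ`; this is exactly `ν_μ`. Hence every representing measure of the
shifted sequence equals `ν_μ`. -/

namespace Paper

open Set

variable {ν : Measure ℝ} {t : ℕ → ℝ}

lemma IsRepMeasure.measure_univ (h : IsRepMeasure ν t) : ν univ = ENNReal.ofReal (t 0) := by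
  have hint := (h.2 0).1
  simp only [pow_zero] at hint
  have : IsFiniteMeasure ν := (integrable_const_iff.mp hint).resolve_left one_ne_zero
  rw [(h.2 0).2]
  simp [measureReal_def]

lemma ae_nonneg_of_measure_Iio_eq_zero (h : ν (Iio 0) = 0) : ∀ᵐ s ∂ν, 0 ≤ s := by
  rw [ae_iff]
  simp only [not_le]
  exact h

lemma IsRepMeasure.mumap_shift (h : IsRepMeasure ν t) :
    IsRepMeasure (mumap ν) (fun n => t (n + 1)) := by
  have hdens : mumap ν = ν.withDensity (fun s => (Real.toNNReal s : ℝ≥0∞)) := rfl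
  refine ⟨?_, fun n => ?_⟩
  · rw [mumap, withDensity_apply _ measurableSet_Iio]
    exact setLIntegral_measure_zero _ _ h.1
  · have hsmul : (fun s : ℝ => Real.toNNReal s • s ^ n) =ᵐ[ν] fun s => s ^ (n + 1) := by
      filter_upwards [ae_nonneg_of_measure_Iio_eq_zero h.1] with s hs
      simp [NNReal.smul_def, Real.coe_toNNReal s hs, pow_succ, mul_comm]
    rw [hdens, integrable_withDensity_iff_integrable_smul measurable_real_toNNReal,
      integral_withDensity_eq_integral_smul measurable_real_toNNReal, integral_congr_ae hsmul]
    exact ⟨(h.2 (n + 1)).1.congr hsmul.symm, (h.2 (n + 1)).2⟩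

lemma withDensity_inv_mumap (ν : Measure ℝ) :
    (mumap ν).withDensity (fun s => (ENNReal.ofReal s)⁻¹) = ν.restrict (Ioi 0) := by
  have hprod : (fun s : ℝ => ENNReal.ofReal s) * (fun s => (ENNReal.ofReal s)⁻¹)
      = (Ioi 0).indicator 1 := by
    funext s
    by_cases hs : 0 < s
    · simp only [Pi.mul_apply, indicator_of_mem (mem_Ioi.mpr hs), Pi.one_apply]
      exact ENNReal.mul_inv_cancel (by simpa using hs) ENNReal.ofReal_ne_top
    · simp [hs, ENNReal.ofReal_eq_zero.mpr (not_lt.mp hs)]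
  have hof : Measurable fun s : ℝ => ENNReal.ofReal s := ENNReal.measurable_ofReal
  rw [mumap, ← withDensity_mul _ (g := fun s : ℝ => (ENNReal.ofReal s)⁻¹) hof hof.inv, hprod,
    withDensity_indicator measurableSet_Ioi, withDensity_one]

lemma recipInt_mumap_univ (ν : Measure ℝ) : recipInt (mumap ν) univ = ν (Ioi 0) := by
  rw [recipInt, ← withDensity_apply _ MeasurableSet.univ, withDensity_inv_mumap,
    Measure.restrict_apply_univ]

lemma restrict_Ioi_add_dirac_eq_self (h : ν (Iio 0) = 0) :
    ν.restrict (Ioi 0) + ν {0} • Measure.dirac 0 = ν := by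
  have hIic : Iic (0 : ℝ) =ᵐ[ν] ({0} : Set ℝ) := by
    rw [ae_eq_set, Iic_sdiff_right, sdiff_eq_empty.mpr (singleton_subset_iff.mpr self_mem_Iic)]
    exact ⟨h, measure_empty⟩
  rw [← Measure.restrict_singleton, ← Measure.restrict_congr_set hIic, ← compl_Ioi,
    Measure.restrict_add_restrict_compl measurableSet_Ioi]

lemma numap_mumap (θ : ℝ) (h : ν (Iio 0) = 0) (huniv : ν univ = ENNReal.ofReal θ) :
    numap θ (mumap ν) = ν := by
  have hatom : ν {0} = ENNReal.ofReal θ - ν (Ioi 0) := by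
    have hmass := congrArg (· univ) (restrict_Ioi_add_dirac_eq_self h)
    simp only [Measure.add_apply, Measure.restrict_apply_univ, Measure.smul_apply,
      Measure.dirac_apply_of_mem (mem_univ _), smul_eq_mul, mul_one, huniv] at hmass
    refine ENNReal.eq_sub_of_add_eq ?_ ((add_comm _ _).trans hmass)
    exact ne_top_of_le_ne_top (huniv ▸ ENNReal.ofReal_ne_top) (measure_mono (subset_univ _))
  rw [numap, withDensity_inv_mumap, recipInt_mumap_univ, ← hatom,
    restrict_Ioi_add_dirac_eq_self h]

end Paper

theorem stmt6_general (t : ℕ → ℝ) (θ : ℝ) (μ : Measure ℝ)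
    (hμ : IsRepMeasure μ t) (hdet : Determinate t)
    (hS' : IsStieltjes (prepend θ t)) :
    Determinate (prepend θ t) ∧
    recipInt μ Set.univ ≤ ENNReal.ofReal θ ∧
    IsRepMeasure (numap θ μ) (prepend θ t) := by
  have hmass {ν : Measure ℝ} (hν : IsRepMeasure ν (prepend θ t)) :
      ν Set.univ = ENNReal.ofReal θ :=
    hν.measure_univ
  have hμ_eq {ν : Measure ℝ} (hν : IsRepMeasure ν (prepend θ t)) : μ = mumap ν :=
    hdet hμ hν.mumap_shift
  have hunique {ν : Measure ℝ} (hν : IsRepMeasure ν (prepend θ t)) : ν = numap θ μ := by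
    rw [hμ_eq hν, numap_mumap θ hν.1 (hmass hν)]
  obtain ⟨ν, hν⟩ := hS'
  refine ⟨fun ν₁ ν₂ h₁ h₂ => (hunique h₁).trans (hunique h₂).symm, ?_, hunique hν ▸ hν⟩
  rw [hμ_eq hν, recipInt_mumap_univ, ← hmass hν]
  exact measure_mono (Set.subset_univ _)

/-- determinacy of backward extensions. -/
theorem stmt6 (t : ℕ → ℝ) (θ : ℝ) (hθ : 0 < θ) (μ : Measure ℝ)
    (hμ : IsRepMeasure μ t) (hdet : Determinate t)
    (hS' : IsStieltjes (prepend θ t)) :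
    Determinate (prepend θ t) ∧
    recipInt μ Set.univ ≤ ENNReal.ofReal θ ∧
    IsRepMeasure (numap θ μ) (prepend θ t) :=
  stmt6_general t θ μ hμ hdet hS'
end
end

section
/- Let T be a directed tree, let {λ_v}_{v∈V°} be complex numbers, {ε_u}_{u∈V} nonnegative reals and {μ_u}_{u∈V} Borel probability measures on ℝ₊ satisfying the consistency equation at every u ∈ V. Then: (i) for every u ∈ V, Σ_{v∈Chi(u)} |λ_v|² ∫_0^∞ (1/s) dμ_v(s) ≤ 1 and ε_u = 1 − Σ_{v∈Chi(u)} |λ_v|² ∫_0^∞ (1/s) dμ_v(s); (ii) for every u ∈ V, μ_u({0}) = 0 if and only if ε_u = 0; (iii) for every v ∈ V°, if λ_v ≠ 0 then μ_v({0}) = 0; (iv) for every u ∈ V and every integer n ≥ 1, μ_u(σ) = Σ_{v∈Chi^⟨n⟩(u)} |λ_{u|v}|² ∫_σ (1/sⁿ) dμ_v(s) + ε_u δ₀(σ) for all Borel σ ⊆ ℝ₊. -/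
open Filter
open scoped ENNReal InnerProductSpace ComplexConjugate

attribute [local instance] Classical.propDecidable

noncomputable section

open Paper MeasureTheory Filter
open scoped ENNReal

/-!
Evaluating the consistency equation on `ℝ₊` gives (i). On `σ = {0}` the integral
`∫_{0} (1/s) dμ_v` is `∞ · μ_v({0})`; as `μ_u({0}) ≤ 1`, every child `v` with `λ_v ≠ 0` has
`μ_v({0}) = 0`, and then `μ_u({0}) = ε_u`, which gives (ii) and (iii). For (iv) induct on `n`:
if `λ_{u|v} ≠ 0` for `v ∈ Chi^⟨n⟩(u)` then `λ_v ≠ 0`, so `ε_v = 0`, and integrating `1/sⁿ`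
against the consistency equation at `v` pushes the term of `v` down to its children;
`Chi^⟨n+1⟩(u)` is the disjoint union of the `Chi(v)`, `v ∈ Chi^⟨n⟩(u)`.
-/

namespace Paper

theorem recipInt_singleton_zero (ν : Measure ℝ) : recipInt ν {0} = ⊤ * ν {0} := by
  rw [recipInt, lintegral_singleton]
  simp

namespace DirectedTree

variable {V : Type*} (t : DirectedTree V)

theorem par_eq_of_E {a b : V} (h : t.E a b) : t.par b = a := by
  have hb : t.hasPar b := ⟨a, h⟩
  rw [par, dif_pos hb]
  exact t.par_unique hb.choose_spec h

theorem wprod_succ_of_E (lam : V → ℂ) (m : ℕ) {a b : V} (h : t.E a b) :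
    t.wprod lam (m + 1) b = t.wprod lam m a * lam b := by
  simp only [wprod, Finset.prod_range_succ', Function.iterate_succ_apply, t.par_eq_of_E h,
    Function.iterate_zero_apply]

theorem chin_one (u : V) : t.chin 1 u = t.chi u := by
  ext w
  simp [chin, chiIter, chiSet, chi]

def chinSuccEquiv (n : ℕ) (u : V) :
    (Σ v : t.chin n u, t.chi (v : V)) ≃ t.chin (n + 1) u :=
  Equiv.ofBijective (fun p => ⟨p.2, p.1, p.1.2, p.2.2⟩) <| by
    constructor
    · rintro ⟨⟨v₁, hv₁⟩, ⟨w, hw₁⟩⟩ ⟨⟨v₂, hv₂⟩, ⟨w', hw₂⟩⟩ h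
      obtain rfl : w = w' := congrArg Subtype.val h
      obtain rfl : v₁ = v₂ := t.par_unique hw₁ hw₂
      rfl
    · rintro ⟨w, v, hv, hvw⟩
      exact ⟨⟨⟨v, hv⟩, ⟨w, hvw⟩⟩, rfl⟩

theorem tsum_chin_succ (n : ℕ) (u : V) (f : V → ℝ≥0∞) :
    ∑' w : t.chin (n + 1) u, f w = ∑' v : t.chin n u, ∑' w : t.chi (v : V), f w :=
  ((t.chinSuccEquiv n u).tsum_eq (fun w => f w)).symm.trans
    (ENNReal.tsum_sigma' fun p : Σ v : t.chin n u, t.chi (v : V) => f p.2)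

end DirectedTree

namespace Consistent

variable {V : Type*} {t : DirectedTree V} {lam : V → ℂ} {μ : V → Measure ℝ} {ε : V → ℝ}
  {u : V}

theorem tsum_add_eq_one [IsProbabilityMeasure (μ u)] (hu : Consistent t lam μ ε u) :
    (∑' v : t.chi u, ENNReal.ofReal (‖lam (v : V)‖ ^ 2) * recipInt (μ (v : V)) Set.univ)
      + ENNReal.ofReal (ε u) = 1 := by
  simpa using (hu Set.univ MeasurableSet.univ).symm

/-- Since `∫_{0} (1/s) dμ_v = ∞ · μ_v({0})`, a nonzero child term at `{0}` would be infinite. -/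
theorem child_term_singleton_zero [IsFiniteMeasure (μ u)] (hu : Consistent t lam μ ε u)
    (v : t.chi u) : ENNReal.ofReal (‖lam (v : V)‖ ^ 2) * recipInt (μ (v : V)) {0} = 0 := by
  have hle : ENNReal.ofReal (‖lam (v : V)‖ ^ 2) * recipInt (μ (v : V)) {0} ≤ μ u {0} := by
    rw [hu {0} (measurableSet_singleton 0)]
    exact (ENNReal.le_tsum v).trans le_self_add
  have hfin := (hle.trans_lt (measure_lt_top (μ u) {0})).ne
  rw [recipInt_singleton_zero, ← mul_assoc] at hfin ⊢
  by_contra h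
  simp only [mul_eq_zero, ENNReal.top_ne_zero, or_false, not_or] at h
  exact hfin (by rw [ENNReal.mul_top h.1, ENNReal.top_mul h.2])

theorem measure_singleton_zero [IsFiniteMeasure (μ u)] (hu : Consistent t lam μ ε u) :
    μ u {0} = ENNReal.ofReal (ε u) := by
  rw [hu {0} (measurableSet_singleton 0), ENNReal.tsum_eq_zero.2 hu.child_term_singleton_zero]
  simp

theorem measure_singleton_zero_of_mem_chi [IsFiniteMeasure (μ u)]
    (hu : Consistent t lam μ ε u) {v : V} (hv : v ∈ t.chi u) (hlam : lam v ≠ 0) :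
    μ v {0} = 0 := by
  have h := hu.child_term_singleton_zero ⟨v, hv⟩
  rw [recipInt_singleton_zero] at h
  simpa [hlam] using h

theorem eq_sum_withDensity_add_dirac (hu : Consistent t lam μ ε u) :
    μ u = Measure.sum (fun v : t.chi u => ENNReal.ofReal (‖lam (v : V)‖ ^ 2) •
        (μ (v : V)).withDensity fun s => (ENNReal.ofReal s)⁻¹) +
      ENNReal.ofReal (ε u) • Measure.dirac (0 : ℝ) := by
  ext σ hσ
  rw [hu σ hσ, Measure.add_apply, Measure.sum_apply _ hσ, Measure.smul_apply, smul_eq_mul]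
  congr 1
  refine tsum_congr fun v => ?_
  rw [Measure.smul_apply, smul_eq_mul, withDensity_apply _ hσ, recipInt]

theorem setLIntegral_inv_pow (hu : Consistent t lam μ ε u) (hεu : ENNReal.ofReal (ε u) = 0)
    (n : ℕ) {σ : Set ℝ} (hσ : MeasurableSet σ) :
    ∫⁻ s in σ, (ENNReal.ofReal s ^ n)⁻¹ ∂μ u
      = ∑' v : t.chi u, ENNReal.ofReal (‖lam (v : V)‖ ^ 2) *
          ∫⁻ s in σ, (ENNReal.ofReal s ^ (n + 1))⁻¹ ∂μ (v : V) := by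
  have hrecip : Measurable fun s : ℝ => (ENNReal.ofReal s)⁻¹ := ENNReal.measurable_ofReal.inv
  have hrecipPow : Measurable fun s : ℝ => (ENNReal.ofReal s ^ n)⁻¹ :=
    (ENNReal.measurable_ofReal.pow_const n).inv
  rw [hu.eq_sum_withDensity_add_dirac, hεu, zero_smul, add_zero, Measure.restrict_sum _ hσ, lintegral_sum_measure]
  refine tsum_congr fun v => ?_
  rw [Measure.restrict_smul, lintegral_smul_measure, smul_eq_mul, restrict_withDensity hσ,
    lintegral_withDensity_eq_lintegral_mul _ hrecip hrecipPow]
  simp only [Pi.mul_apply, ENNReal.inv_pow, ← pow_succ']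

end Consistent

section Iterated

variable {V : Type*}

/-- `|λ_{u|v}|² ∫_σ (1/sⁿ) dμ_v(s)` for `v ∈ Chi^⟨n⟩(u)`. -/
def iterTerm (t : DirectedTree V) (lam : V → ℂ) (μ : V → Measure ℝ) (σ : Set ℝ) (n : ℕ)
    (v : V) : ℝ≥0∞ :=
  ENNReal.ofReal (‖t.wprod lam n v‖ ^ 2) * ∫⁻ s in σ, (ENNReal.ofReal s ^ n)⁻¹ ∂μ v

variable {t : DirectedTree V} {lam : V → ℂ} {μ : V → Measure ℝ} {ε : V → ℝ}

/-- If `λ_v ≠ 0` then `ε_v = 0`, so the term of `v` may be expanded by the consistency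
equation at `v`; if `λ_v = 0` both sides vanish. -/
theorem iterTerm_succ_eq_tsum_chi [∀ u, IsFiniteMeasure (μ u)]
    (hcons : ∀ u, Consistent t lam μ ε u) {p v : V} (hpv : t.E p v) (m : ℕ) {σ : Set ℝ}
    (hσ : MeasurableSet σ) :
    iterTerm t lam μ σ (m + 1) v = ∑' w : t.chi v, iterTerm t lam μ σ (m + 2) w := by
  unfold iterTerm
  by_cases hlam : lam v = 0
  · have hv : t.wprod lam (m + 1) v = 0 := by rw [t.wprod_succ_of_E lam m hpv, hlam, mul_zero]
    rw [hv, norm_zero, zero_pow two_ne_zero, ENNReal.ofReal_zero, zero_mul]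
    refine (ENNReal.tsum_eq_zero.2 fun w => ?_).symm
    simp [t.wprod_succ_of_E lam (m + 1) w.2, hv]
  · have hεv : ENNReal.ofReal (ε v) = 0 := by
      rw [← (hcons v).measure_singleton_zero]
      exact (hcons p).measure_singleton_zero_of_mem_chi hpv hlam
    rw [(hcons v).setLIntegral_inv_pow hεv _ hσ, ← ENNReal.tsum_mul_left]
    refine tsum_congr fun w => ?_
    rw [← mul_assoc, t.wprod_succ_of_E lam (m + 1) w.2, norm_mul, mul_pow,
      ENNReal.ofReal_mul (by positivity)]

theorem measure_eq_tsum_iterTerm [∀ u, IsFiniteMeasure (μ u)]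
    (hcons : ∀ u, Consistent t lam μ ε u) (u : V) (n : ℕ) {σ : Set ℝ} (hσ : MeasurableSet σ) :
    μ u σ = (∑' v : t.chin (n + 1) u, iterTerm t lam μ σ (n + 1) v)
        + ENNReal.ofReal (ε u) * Measure.dirac (0 : ℝ) σ := by
  induction n with
  | zero =>
    rw [hcons u σ hσ, zero_add, t.chin_one]
    simp [iterTerm, DirectedTree.wprod, recipInt]
  | succ n ih =>
    rw [ih, t.tsum_chin_succ (n + 1) u]
    congr 1
    refine tsum_congr fun v => ?_
    obtain ⟨p, -, hpv⟩ : ∃ p ∈ t.chiIter n {u}, t.E p v := v.2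
    exact iterTerm_succ_eq_tsum_chi hcons hpv n hσ

end Iterated

end Paper

theorem stmt14_general {V : Type*} (t : Paper.DirectedTree V) (lam : V → ℂ)
    (μ : V → Measure ℝ) (ε : V → ℝ)
    (hprob : ∀ u : V, IsProbabilityMeasure (μ u))
    (hε : ∀ u : V, 0 ≤ ε u) (hcons : ∀ u : V, Consistent t lam μ ε u) :
    (∀ u : V,
      (∑' v : t.chi u, ENNReal.ofReal (‖lam (v : V)‖ ^ 2) * recipInt (μ (v : V)) Set.univ) ≤ 1 ∧
      ENNReal.ofReal (ε u)
        = 1 - ∑' v : t.chi u,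
            ENNReal.ofReal (‖lam (v : V)‖ ^ 2) * recipInt (μ (v : V)) Set.univ) ∧
    (∀ u : V, μ u {0} = 0 ↔ ε u = 0) ∧
    (∀ v : V, t.hasPar v → lam v ≠ 0 → μ v {0} = 0) ∧
    (∀ (u : V) (n : ℕ), 1 ≤ n → ∀ σ : Set ℝ, MeasurableSet σ →
      μ u σ = (∑' v : t.chin n u, ENNReal.ofReal (‖t.wprod lam n (v : V)‖ ^ 2) *
          ∫⁻ s in σ, (ENNReal.ofReal s ^ n)⁻¹ ∂(μ (v : V)))
        + ENNReal.ofReal (ε u) * Measure.dirac (0 : ℝ) σ) := by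
  refine ⟨fun u => ?_, fun u => ?_, fun v ⟨p, hpv⟩ hlam =>
    (hcons p).measure_singleton_zero_of_mem_chi hpv hlam, fun u n hn σ hσ => ?_⟩
  · have hsum := (hcons u).tsum_add_eq_one
    have hle : _ ≤ (1 : ℝ≥0∞) := hsum ▸ le_self_add
    exact ⟨hle, ENNReal.eq_sub_of_add_eq (ne_top_of_le_ne_top ENNReal.one_ne_top hle)
      ((add_comm _ _).trans hsum)⟩
  · rw [(hcons u).measure_singleton_zero, ENNReal.ofReal_eq_zero]
    exact ⟨fun h => le_antisymm h (hε u), le_of_eq⟩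
  · obtain ⟨m, rfl⟩ := Nat.exists_eq_add_of_le' hn
    exact measure_eq_tsum_iterTerm hcons u m hσ

/-- properties of consistent systems of probability measures. -/
theorem stmt14 {V : Type*} (t : Paper.DirectedTree V) (lam : V → ℂ)
    (μ : V → Measure ℝ) (ε : V → ℝ)
    (hprob : ∀ u : V, IsProbabilityMeasure (μ u)) (hpos : ∀ u : V, μ u (Set.Iio 0) = 0)
    (hε : ∀ u : V, 0 ≤ ε u) (hcons : ∀ u : V, Consistent t lam μ ε u) :
    (∀ u : V,
      (∑' v : t.chi u, ENNReal.ofReal (‖lam (v : V)‖ ^ 2) * recipInt (μ (v : V)) Set.univ) ≤ 1 ∧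
      ENNReal.ofReal (ε u)
        = 1 - ∑' v : t.chi u,
            ENNReal.ofReal (‖lam (v : V)‖ ^ 2) * recipInt (μ (v : V)) Set.univ) ∧
    (∀ u : V, μ u {0} = 0 ↔ ε u = 0) ∧
    (∀ v : V, t.hasPar v → lam v ≠ 0 → μ v {0} = 0) ∧
    (∀ (u : V) (n : ℕ), 1 ≤ n → ∀ σ : Set ℝ, MeasurableSet σ →
      μ u σ = (∑' v : t.chin n u, ENNReal.ofReal (‖t.wprod lam n (v : V)‖ ^ 2) *
          ∫⁻ s in σ, (ENNReal.ofReal s ^ n)⁻¹ ∂(μ (v : V)))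
        + ENNReal.ofReal (ε u) * Measure.dirac (0 : ℝ) σ) :=
  stmt14_general t lam μ ε hprob hε hcons
end
end
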